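/- arXiv:1912.07835 — 4 statements merged into one kernel-verified Lean document; each statement's English description precedes it below -/
import Mathlib

section
/- Suppose 0 < q < 1, ε > 0, h ≥ 0, Δt > 0. If u, v ∈ (q,1) and u' is defined by u' = (u + uΔt/ε + hqvΔt/(u+q))/(1 + uΔt/ε + hvΔt/(u+q)), then u' - q = ((u - q) + (1-q)uΔt/ε)/(1 + uΔt/ε + hvΔt/(u+q)), and hence u' > q. -/
/-!
With `a = uΔt/ε ≥ 0` and `b = hvΔt/(u+q) ≥ 0`, the step reads `u' = (u + a + q b)/(1 + a + b)`,
a weighted mean of `u`, `1` and `q` with weights `1`, `a`, `b`. Subtracting `q` removes the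
`b`-term from the numerator, which leaves `(u - q) + (1 - q) a > 0`.
-/

lemma div_one_add_add_sub {a b q u : ℝ} (hD : 1 + a + b ≠ 0) :
    (u + a + q * b) / (1 + a + b) - q = (u - q + (1 - q) * a) / (1 + a + b) := by
  field_simp
  ring

lemma lt_div_one_add_add {a b q u : ℝ} (hqu : q < u) (hq : q ≤ 1) (ha : 0 ≤ a) (hb : 0 ≤ b) :
    q < (u + a + q * b) / (1 + a + b) := by
  have hD : 0 < 1 + a + b := by linarith
  rw [← sub_pos, div_one_add_add_sub hD.ne']
  have : 0 ≤ (1 - q) * a := mul_nonneg (sub_nonneg.mpr hq) ha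
  exact div_pos (by linarith) hD

theorem stmt_1 (ε h q Δt u v u' : ℝ)
    (hε : 0 < ε) (hh : 0 ≤ h) (hq0 : 0 < q) (hq1 : q < 1) (hΔt : 0 < Δt)
    (hu : u ∈ Set.Ioo q 1) (hv : v ∈ Set.Ioo q 1)
    (hu' : u' = (u + u * Δt / ε + h * q * v * Δt / (u + q)) /
        (1 + u * Δt / ε + h * v * Δt / (u + q))) :
    u' - q = ((u - q) + (1 - q) * u * Δt / ε) /
        (1 + u * Δt / ε + h * v * Δt / (u + q)) ∧ q < u' := by
  have hu0 : 0 < u := hq0.trans hu.1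
  have ha : 0 ≤ u * Δt / ε := by positivity
  have hb : 0 ≤ h * v * Δt / (u + q) := by
    have : 0 < v := hq0.trans hv.1
    positivity
  have hu'_mean : u' = (u + u * Δt / ε + q * (h * v * Δt / (u + q))) /
      (1 + u * Δt / ε + h * v * Δt / (u + q)) := by
    rw [hu']
    ring
  rw [hu'_mean, div_one_add_add_sub (by linarith)]
  refine ⟨by ring, lt_div_one_add_add hu.1 hq1.le ha hb⟩
end

section
/- The open square (q,1)² is invariant under the map (u,v) ↦ (u', v') where u' = (u + uΔt/ε + hqvΔt/(u+q))/(1 + uΔt/ε + hvΔt/(u+q)) and v' = (v + uΔt)/(1+Δt), for any ε > 0, h ≥ 0, 0 < q < 1, Δt > 0. That is, if (u,v) ∈ (q,1)² then (u',v') ∈ (q,1)². -/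
/-!
Both coordinates of the map are weighted means: `u'` is the mean of `u`, `1` and `q` with the
nonnegative weights `1`, `u Δt / ε` and `h v Δt / (u + q)`, and `v'` is the mean of `v` and `u`
with weights `1` and `Δt`. A weighted mean of points of `[q, 1]` that gives positive weight to a
point of `(q, 1)` lies in `(q, 1)`.
-/

open Set

theorem mul_add_mul_div_add_mem_Ioo {a b c w x y : ℝ} (hx : x ∈ Ioo a b) (hy : y ∈ Icc a b)
    (hc : 0 < c) (hw : 0 ≤ w) : (c * x + w * y) / (c + w) ∈ Ioo a b := by
  obtain ⟨hax, hxb⟩ := hx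
  obtain ⟨hay, hyb⟩ := hy
  have hcw : 0 < c + w := by linarith
  rw [mem_Ioo, lt_div_iff₀ hcw, div_lt_iff₀ hcw]
  constructor <;> nlinarith

theorem add_mul_add_mul_div_one_add_add_mem_Ioo {a b s t x y z : ℝ} (hx : x ∈ Ioo a b)
    (hy : y ∈ Icc a b) (hz : z ∈ Icc a b) (hs : 0 ≤ s) (ht : 0 ≤ t) :
    (x + s * y + t * z) / (1 + s + t) ∈ Ioo a b := by
  have hs1 : 0 < 1 + s := by linarith
  have hxy := mul_add_mul_div_add_mem_Ioo hx hy one_pos hs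
  convert mul_add_mul_div_add_mem_Ioo hxy hz hs1 ht using 2
  field_simp

theorem stmt_4 (ε h q Δt : ℝ)
    (hε : 0 < ε) (hh : 0 ≤ h) (hq0 : 0 < q) (hq1 : q < 1) (hΔt : 0 < Δt)
    (u v : ℝ) (hu : u ∈ Set.Ioo q 1) (hv : v ∈ Set.Ioo q 1) :
    (u + u * Δt / ε + h * q * v * Δt / (u + q)) /
        (1 + u * Δt / ε + h * v * Δt / (u + q)) ∈ Set.Ioo q 1 ∧
    (v + u * Δt) / (1 + Δt) ∈ Set.Ioo q 1 := by
  have hu0 : 0 < u := hq0.trans hu.1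
  have hv0 : 0 < v := hq0.trans hv.1
  have hq1' : q ≤ 1 := hq1.le
  constructor
  · have hA : 0 ≤ u * Δt / ε := by positivity
    have hB : 0 ≤ h * v * Δt / (u + q) := by positivity
    convert add_mul_add_mul_div_one_add_add_mem_Ioo hu (right_mem_Icc.2 hq1')
      (left_mem_Icc.2 hq1') hA hB using 2
    ring
  · convert mul_add_mul_div_add_mem_Ioo hv (Ioo_subset_Icc_self hu) one_pos hΔt.le using 2
    ring
end

section
/- Let 0 < q < 1, ε > 0, h ≥ 0, d ≥ 0, Δt > 0, Δx > 0 with Δt/Δx² ≤ 1/max{2, 2d}. Consider functions u^k, v^k : {0,…,J} → ℝ obtained by alternately applying the reaction step (u,v) ↦ ((u + uΔt/ε + hqvΔt/(u+q))/(1 + uΔt/ε + hvΔt/(u+q)), (v + uΔt)/(1+Δt)) pointwise and the FTCS diffusion steps ũ_j = u_j + (Δt/Δx²)(u_{j+1}-2u_j+u_{j-1}), ṽ_j = v_j + (dΔt/Δx²)(v_{j+1}-2v_j+v_{j-1}) with periodic boundary conditions. If u_j^0, v_j^0 ∈ (q,1) for all j, then u_j^k, v_j^k ∈ (q,1) for all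 j and all k ∈ ℕ. -/
/-! Both half-steps are averages. The reaction step replaces `u` by the weighted average
`(u + a·1 + b·q) / (1 + a + b)` of `u`, `1` and `q` with `a, b ≥ 0`, and `v` by the average
`(v + Δt·u) / (1 + Δt)`; since `u` and `v` keep a positive weight, the open interval `(q, 1)`
is preserved. Under the CFL condition the FTCS step
`x + λ (y - 2x + z) = (1 - 2λ) x + 2λ (y + z)/2` has `0 ≤ λ ≤ 1/2`, so it is a convex
combination of neighbouring values. Induction on the time step concludes. -/

open Set

lemma Convex.add_mul_second_difference_mem {S : Set ℝ} (hS : Convex ℝ S) {a x y z : ℝ}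
    (ha : 0 ≤ a) (ha' : 2 * a ≤ 1) (hx : x ∈ S) (hy : y ∈ S) (hz : z ∈ S) :
    x + a * (y - 2 * x + z) ∈ S := by
  have hmid : (1 / 2 : ℝ) • y + (1 / 2 : ℝ) • z ∈ S :=
    hS hy hz (by norm_num) (by norm_num) (by norm_num)
  have h := hS hx hmid (by linarith) (by linarith) (sub_add_cancel 1 (2 * a))
  convert h using 1
  simp only [smul_eq_mul]
  ring

lemma add_mul_add_mul_div_mem_Ioo {l r x y z a b : ℝ} (hx : x ∈ Ioo l r)
    (hy : y ∈ Icc l r) (hz : z ∈ Icc l r) (ha : 0 ≤ a) (hb : 0 ≤ b) :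
    (x + a * y + b * z) / (1 + a + b) ∈ Ioo l r := by
  have hD : 0 < 1 + a + b := by linarith
  constructor
  · rw [lt_div_iff₀ hD]
    nlinarith [hx.1, mul_le_mul_of_nonneg_left hy.1 ha, mul_le_mul_of_nonneg_left hz.1 hb]
  · rw [div_lt_iff₀ hD]
    nlinarith [hx.2, mul_le_mul_of_nonneg_left hy.2 ha, mul_le_mul_of_nonneg_left hz.2 hb]

lemma reaction_u_mem_Ioo {ε h q Δt U V : ℝ} (hε : 0 < ε) (hh : 0 ≤ h) (hq : 0 < q)
    (hΔt : 0 ≤ Δt) (hU : U ∈ Ioo q 1) (hV : V ∈ Ioo q 1) :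
    (U + U * Δt / ε + h * q * V * Δt / (U + q)) /
      (1 + U * Δt / ε + h * V * Δt / (U + q)) ∈ Ioo q 1 := by
  have hq1 : q ≤ 1 := (hU.1.trans hU.2).le
  have ha : 0 ≤ U * Δt / ε := by have := hq.trans hU.1; positivity
  have hb : 0 ≤ h * V * Δt / (U + q) := by
    have := hq.trans hU.1; have := hq.trans hV.1; positivity
  have key := add_mul_add_mul_div_mem_Ioo hU ⟨hq1, le_rfl⟩ ⟨le_rfl, hq1⟩ ha hb
  convert key using 2
  ring

lemma reaction_v_mem_Ioo {q Δt U V : ℝ} (hΔt : 0 ≤ Δt) (hU : U ∈ Ioo q 1)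
    (hV : V ∈ Ioo q 1) :
    (V + U * Δt) / (1 + Δt) ∈ Ioo q 1 := by
  have key := add_mul_add_mul_div_mem_Ioo hV (Ioo_subset_Icc_self hU)
    (Ioo_subset_Icc_self hU) hΔt le_rfl
  convert key using 2 <;> ring

lemma two_mul_le_one_of_le_one_div_max {r d : ℝ} (hr : 0 ≤ r) (h : r ≤ 1 / max 2 (2 * d)) :
    2 * r ≤ 1 ∧ 2 * (d * r) ≤ 1 := by
  have hM : 0 < max 2 (2 * d) := lt_max_of_lt_left two_pos
  have hrM : r * max 2 (2 * d) ≤ 1 := (le_div_iff₀ hM).mp h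
  constructor
  · nlinarith [le_max_left 2 (2 * d)]
  · nlinarith [le_max_right 2 (2 * d)]

theorem stmt_7_general (ε h q d Δt Δx : ℝ)
    (hε : 0 < ε) (hh : 0 ≤ h) (hq0 : 0 < q) (hd : 0 ≤ d)
    (hΔt : 0 < Δt)
    (hstab : Δt / Δx ^ 2 ≤ 1 / max 2 (2 * d))
    (J : ℕ)
    (u v ru rv : ℕ → ZMod J → ℝ)
    (hru : ∀ k j, ru k j = (u k j + u k j * Δt / ε + h * q * v k j * Δt / (u k j + q)) /
        (1 + u k j * Δt / ε + h * v k j * Δt / (u k j + q)))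
    (hrv : ∀ k j, rv k j = (v k j + u k j * Δt) / (1 + Δt))
    (hu : ∀ k j, u (k + 1) j =
        ru k j + Δt / Δx ^ 2 * (ru k (j + 1) - 2 * ru k j + ru k (j - 1)))
    (hv : ∀ k j, v (k + 1) j =
        rv k j + d * Δt / Δx ^ 2 * (rv k (j + 1) - 2 * rv k j + rv k (j - 1)))
    (h0 : ∀ j, u 0 j ∈ Set.Ioo q 1 ∧ v 0 j ∈ Set.Ioo q 1) :
    ∀ k j, u k j ∈ Set.Ioo q 1 ∧ v k j ∈ Set.Ioo q 1 := by
  have hκ : 0 ≤ Δt / Δx ^ 2 := by positivity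
  obtain ⟨hκ', hμ'⟩ := two_mul_le_one_of_le_one_div_max hκ hstab
  rw [← mul_div_assoc] at hμ'
  have hμ : 0 ≤ d * Δt / Δx ^ 2 := by positivity
  intro k
  induction k with
  | zero => exact h0
  | succ k ih =>
    have hr : ∀ j, ru k j ∈ Ioo q 1 ∧ rv k j ∈ Ioo q 1 := fun j =>
      ⟨hru k j ▸ reaction_u_mem_Ioo hε hh hq0 hΔt.le (ih j).1 (ih j).2,
        hrv k j ▸ reaction_v_mem_Ioo hΔt.le (ih j).1 (ih j).2⟩
    intro j
    rw [hu k j, hv k j]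
    exact ⟨(convex_Ioo q 1).add_mul_second_difference_mem hκ hκ' (hr j).1 (hr (j + 1)).1
        (hr (j - 1)).1,
      (convex_Ioo q 1).add_mul_second_difference_mem hμ hμ' (hr j).2 (hr (j + 1)).2
        (hr (j - 1)).2⟩

theorem stmt_7 (ε h q d Δt Δx : ℝ)
    (hε : 0 < ε) (hh : 0 ≤ h) (hq0 : 0 < q) (hq1 : q < 1) (hd : 0 ≤ d)
    (hΔt : 0 < Δt) (hΔx : 0 < Δx)
    (hstab : Δt / Δx ^ 2 ≤ 1 / max 2 (2 * d))
    (J : ℕ) [NeZero J]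
    (u v ru rv : ℕ → ZMod J → ℝ)
    (hru : ∀ k j, ru k j = (u k j + u k j * Δt / ε + h * q * v k j * Δt / (u k j + q)) /
        (1 + u k j * Δt / ε + h * v k j * Δt / (u k j + q)))
    (hrv : ∀ k j, rv k j = (v k j + u k j * Δt) / (1 + Δt))
    (hu : ∀ k j, u (k + 1) j =
        ru k j + Δt / Δx ^ 2 * (ru k (j + 1) - 2 * ru k j + ru k (j - 1)))
    (hv : ∀ k j, v (k + 1) j =
        rv k j + d * Δt / Δx ^ 2 * (rv k (j + 1) - 2 * rv k j + rv k (j - 1)))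
    (h0 : ∀ j, u 0 j ∈ Set.Ioo q 1 ∧ v 0 j ∈ Set.Ioo q 1) :
    ∀ k j, u k j ∈ Set.Ioo q 1 ∧ v k j ∈ Set.Ioo q 1 :=
  stmt_7_general ε h q d Δt Δx hε hh hq0 hd hΔt hstab J u v ru rv hru hrv hu hv h0
end

section
/- Let f ≥ 0 and g ≥ 0 be real-valued functions on ℝ, d ≥ 0, Δt, Δx > 0 with dΔt/Δx² ≤ 1/2. Define the scheme u_j^{k+1} = (u_j^k + dΔt/Δx² (u_{j+1}^k - 2u_j^k + u_{j-1}^k) + g(u_j^k)Δt)/(1 + f(u_j^k)Δt) (i.e. the combined explicit-diffusion/implicit-reaction update solved for u_j^{k+1}). If u_j^0 ≥ 0 for all j (periodic indexing), then u_j^k ≥ 0 for all j and all k. -/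
/-! Under `d Δt / Δx² ≤ 1/2` the explicit diffusion step writes the new value as a convex
combination of the three old values at `j - 1, j, j + 1`; adding the nonnegative source `g Δt`
and dividing by the positive factor `1 + f Δt` keeps it nonnegative, so positivity propagates
from one time level to the next. -/

theorem diffusion_step_nonneg {r a b c : ℝ} (hr₀ : 0 ≤ r) (hr₁ : r ≤ 1 / 2)
    (ha : 0 ≤ a) (hb : 0 ≤ b) (hc : 0 ≤ c) :
    0 ≤ b + r * (a - 2 * b + c) := by
  have hconvex : b + r * (a - 2 * b + c) = (1 - 2 * r) * b + r * a + r * c := by ring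
  rw [hconvex]
  have hcentre : 0 ≤ 1 - 2 * r := by linarith
  positivity

theorem semiImplicit_step_nonneg {f g : ℝ → ℝ} (hf : ∀ x, 0 ≤ f x) (hg : ∀ x, 0 ≤ g x)
    {r τ a b c : ℝ} (hr₀ : 0 ≤ r) (hr₁ : r ≤ 1 / 2) (hτ : 0 ≤ τ)
    (ha : 0 ≤ a) (hb : 0 ≤ b) (hc : 0 ≤ c) :
    0 ≤ (b + r * (a - 2 * b + c) + g b * τ) / (1 + f b * τ) := by
  have hdiff := diffusion_step_nonneg hr₀ hr₁ ha hb hc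
  have hsource := mul_nonneg (hg b) hτ
  have hdenom := mul_nonneg (hf b) hτ
  positivity

theorem stmt_11_general (f g : ℝ → ℝ) (hf : ∀ x, 0 ≤ f x) (hg : ∀ x, 0 ≤ g x)
    (d Δt Δx : ℝ) (hd : 0 ≤ d) (hΔt : 0 < Δt)
    (hstab : d * Δt / Δx ^ 2 ≤ 1 / 2)
    (J : ℕ) (u : ℕ → ZMod J → ℝ)
    (hstep : ∀ k j, u (k + 1) j =
      (u k j + d * Δt / Δx ^ 2 * (u k (j + 1) - 2 * u k j + u k (j - 1))
        + g (u k j) * Δt) / (1 + f (u k j) * Δt))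
    (h0 : ∀ j, 0 ≤ u 0 j) :
    ∀ k j, 0 ≤ u k j := by
  intro k
  induction k with
  | zero => exact h0
  | succ k ih =>
    intro j
    rw [hstep k j]
    exact semiImplicit_step_nonneg hf hg (by positivity) hstab hΔt.le (ih _) (ih _) (ih _)

theorem stmt_11 (f g : ℝ → ℝ) (hf : ∀ x, 0 ≤ f x) (hg : ∀ x, 0 ≤ g x)
    (d Δt Δx : ℝ) (hd : 0 ≤ d) (hΔt : 0 < Δt) (hΔx : 0 < Δx)
    (hstab : d * Δt / Δx ^ 2 ≤ 1 / 2)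
    (J : ℕ) [NeZero J] (u : ℕ → ZMod J → ℝ)
    (hstep : ∀ k j, u (k + 1) j =
      (u k j + d * Δt / Δx ^ 2 * (u k (j + 1) - 2 * u k j + u k (j - 1))
        + g (u k j) * Δt) / (1 + f (u k j) * Δt))
    (h0 : ∀ j, 0 ≤ u 0 j) :
    ∀ k j, 0 ≤ u k j :=
  stmt_11_general f g hf hg d Δt Δx hd hΔt hstab J u hstep h0
end
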